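/- arXiv:1301.2678 — 2 statements merged into one kernel-verified Lean document; each statement's English description precedes it below -/
import Mathlib

section
/- Let P and P' be AC-MAS with P ≈ P' (bisimilar). Then for every SA-FO-CTL formula φ, P ⊨ φ if and only if P' ⊨ φ. -/
/-!  Common formalisation of artifact-centric multi-agent systems (AC-MAS). -/

open Set

/-- A database schema: a finite type of relation symbols, each with an arity. -/
structure Schema : Type 1 where
  Rel : Type
  [relFin : Fintype Rel]
  arity : Rel → ℕ

attribute [instance] Schema.relFin

/-- A `D`-instance over an interpretation domain `U`: every relation symbol is
interpreted as a finite set of tuples over `U`. -/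
structure Inst (D : Schema) (U : Type) : Type where
  rel : ∀ r : D.Rel, Set (Fin (D.arity r) → U)
  finite : ∀ r, (rel r).Finite

/-- The active domain of an instance. -/
def Inst.adom {D : Schema} {U : Type} (I : Inst D U) : Set U :=
  { u | ∃ (r : D.Rel) (t : Fin (D.arity r) → U), t ∈ I.rel r ∧ ∃ j, t j = u }

/-- The schema `D` together with a primed copy of every relation symbol. -/
def Schema.double (D : Schema) : Schema where
  Rel := D.Rel ⊕ D.Rel
  relFin := inferInstance
  arity := Sum.elim D.arity D.arity

/-- The disjunctive join `I ⊕ J`: unprimed symbols are interpreted as in `I`,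
primed symbols as in `J`. -/
def Inst.oplus {D : Schema} {U : Type} (I J : Inst D U) : Inst D.double U where
  rel := fun r => match r with
    | .inl r₀ => I.rel r₀
    | .inr r₀ => J.rel r₀
  finite := fun r => by
    cases r with
    | inl r₀ => exact I.finite r₀
    | inr r₀ => exact J.finite r₀

/-- Image of an instance under a map of domains. -/
def Inst.map {D : Schema} {C U : Type} (f : C → U) (I : Inst D C) : Inst D U where
  rel := fun r => (fun t => f ∘ t) '' I.rel r
  finite := fun r => (I.finite r).image _

/-! ### First-order formulas -/

/-- Terms: variables (natural numbers) or constants from `C`. -/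
abbrev Term (C : Type) := ℕ ⊕ C

def Term.varsF {C : Type} : Term C → Finset ℕ
  | .inl x => {x}
  | .inr _ => ∅

def Term.constsS {C : Type} : Term C → Set C
  | .inl _ => ∅
  | .inr c => {c}

def Term.val {C U : Type} (cst : C → U) (σ : ℕ → U) : Term C → U
  | .inl x => σ x
  | .inr c => cst c

/-- First-order formulas over schema `D`, with equality, constants from `C`
and no function symbols. -/
inductive FO (D : Schema) (C : Type) : Type where
  | eq : Term C → Term C → FO D C
  | rel : (r : D.Rel) → (Fin (D.arity r) → Term C) → FO D C
  | not : FO D C → FO D C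
  | imp : FO D C → FO D C → FO D C
  | all : ℕ → FO D C → FO D C

namespace FO

variable {D : Schema} {C : Type}

/-- Free variables. -/
def free : FO D C → Finset ℕ
  | .eq t₁ t₂ => t₁.varsF ∪ t₂.varsF
  | .rel _ ts => Finset.univ.biUnion fun j => (ts j).varsF
  | .not φ => φ.free
  | .imp φ ψ => φ.free ∪ ψ.free
  | .all x φ => φ.free.erase x

/-- All variables. -/
def vars : FO D C → Finset ℕ
  | .eq t₁ t₂ => t₁.varsF ∪ t₂.varsF
  | .rel _ ts => Finset.univ.biUnion fun j => (ts j).varsF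
  | .not φ => φ.vars
  | .imp φ ψ => φ.vars ∪ ψ.vars
  | .all x φ => insert x φ.vars

/-- Constants mentioned in a formula. -/
def consts : FO D C → Set C
  | .eq t₁ t₂ => t₁.constsS ∪ t₂.constsS
  | .rel _ ts => ⋃ j, (ts j).constsS
  | .not φ => φ.consts
  | .imp φ ψ => φ.consts ∪ ψ.consts
  | .all _ φ => φ.consts

/-- The formula mentions only relation symbols from `R`. -/
def UsesOnly (R : Set D.Rel) : FO D C → Prop
  | .eq _ _ => True
  | .rel r _ => r ∈ R
  | .not φ => φ.UsesOnly R
  | .imp φ ψ => φ.UsesOnly R ∧ ψ.UsesOnly R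
  | .all _ φ => φ.UsesOnly R

/-- Satisfaction of FO-formulas, with active-domain quantification. -/
def sat {U : Type} (cst : C → U) (I : Inst D U) : (ℕ → U) → FO D C → Prop
  | σ, .eq t₁ t₂ => t₁.val cst σ = t₂.val cst σ
  | σ, .rel r ts => (fun j => (ts j).val cst σ) ∈ I.rel r
  | σ, .not φ => ¬ sat cst I σ φ
  | σ, .imp φ ψ => sat cst I σ φ → sat cst I σ ψ
  | σ, .all x φ => ∀ u ∈ I.adom, sat cst I (Function.update σ x u) φ

end FO

/-! ### Agents and AC-MAS -/

/-- The signature of an agent: a finite set of action types with parameter counts. -/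
structure AgentSig : Type 1 where
  Act : Type
  [actFin : Fintype Act]
  np : Act → ℕ

attribute [instance] AgentSig.actFin

/-- A ground action: an action type together with ground parameters. -/
def GAct (g : AgentSig) (U : Type) : Type := Σ a : g.Act, Fin (g.np a) → U

/-- Renaming of ground-action parameters. -/
def GAct.map {g : AgentSig} {U U' : Type} (f : U → U') : GAct g U → GAct g U'
  | ⟨a, u⟩ => ⟨a, fun j => f (u j)⟩

/-- An agent: local states structured as database instances, and a protocol. -/
structure Agent (D : Schema) (g : AgentSig) (U : Type) : Type where
  L : Set (Inst D U)
  Pr : Inst D U → Set (GAct g U)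

/-- A global state: one local database instance per agent `0, …, n`
(agent `0` is the environment). -/
abbrev GState (D : Schema) (n : ℕ) (U : Type) := Fin (n+1) → Inst D U

/-- A joint (global) ground action. -/
abbrev JAct {n : ℕ} (sig : Fin (n+1) → AgentSig) (U : Type) : Type := ∀ i, GAct (sig i) U

def JAct.map {n : ℕ} {sig : Fin (n+1) → AgentSig} {U U' : Type} (f : U → U')
    (a : JAct sig U) : JAct sig U' := fun i => (a i).map f

/-- The set of individuals occurring as parameters of a joint ground action. -/
def actElems {n : ℕ} {sig : Fin (n+1) → AgentSig} {U : Type} (a : JAct sig U) : Set U :=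
  { u | ∃ (i : Fin (n+1)) (j : Fin ((sig i).np (a i).1)), (a i).2 j = u }

/-- Active domain of a family of instances (e.g. a global state). -/
def adomF {D : Schema} {X U : Type} (s : X → Inst D U) : Set U := ⋃ i, (s i).adom

/-- The global instance `D_s` associated with a global state. -/
def gInst {D : Schema} {n : ℕ} {U : Type} (s : GState D n U) : Inst D U where
  rel := fun r => ⋃ i, (s i).rel r
  finite := fun r => Set.finite_iUnion fun i => (s i).finite r

/-- Componentwise disjunctive join of two global states. -/
def oplusG {D : Schema} {n : ℕ} {U : Type} (s t : GState D n U) : GState D.double n U :=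
  fun i => (s i).oplus (t i)

/-- An artifact-centric multi-agent system. -/
structure ACMAS (D : Schema) {n : ℕ} (sig : Fin (n+1) → AgentSig) {U : Type}
    (Ag : ∀ i, Agent D (sig i) U) : Type where
  /-- set of (reachable) global states -/
  S : Set (GState D n U)
  /-- initial global state -/
  s0 : GState D n U
  s0_mem : s0 ∈ S
  states_local : ∀ s ∈ S, ∀ i, s i ∈ (Ag i).L
  /-- global transition function -/
  τ : GState D n U → JAct sig U → Set (GState D n U)
  /-- `τ` is defined only on protocol-enabled joint actions -/
  tau_enabled : ∀ s a, (τ s a).Nonempty → ∀ i, a i ∈ (Ag i).Pr (s i)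
  tau_closed : ∀ s ∈ S, ∀ a, τ s a ⊆ S

namespace ACMAS

variable {D : Schema} {n : ℕ} {sig : Fin (n+1) → AgentSig} {U : Type}
  {Ag : ∀ i, Agent D (sig i) U}

/-- The transition relation `s → t`. -/
def Tr (M : ACMAS D sig Ag) (s t : GState D n U) : Prop := ∃ a, t ∈ M.τ s a

/-- Epistemic indistinguishability for agent `i`. -/
def Epi (M : ACMAS D sig Ag) (i : Fin (n+1)) (s t : GState D n U) : Prop :=
  s ∈ M.S ∧ t ∈ M.S ∧ s i = t i

/-- Union of the epistemic relations of agents `1, …, n`. -/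
def EpiAny (M : ACMAS D sig Ag) (s t : GState D n U) : Prop :=
  ∃ i : Fin n, M.Epi i.succ s t

/-- The standard assumptions: the transition relation is serial and `S` is
exactly the set of states reachable from `s0`. -/
def Std (M : ACMAS D sig Ag) : Prop :=
  (∀ s ∈ M.S, ∃ t, M.Tr s t) ∧ M.S = { s | Relation.ReflTransGen M.Tr M.s0 s }

/-- An (infinite) run. -/
def IsRun (M : ACMAS D sig Ag) (r : ℕ → GState D n U) : Prop :=
  (∀ k, r k ∈ M.S) ∧ ∀ k, M.Tr (r k) (r (k+1))

/-- A temporal-epistemic run. -/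
def IsTERun (M : ACMAS D sig Ag) (r : ℕ → GState D n U) : Prop :=
  (∀ k, r k ∈ M.S) ∧ ∀ k, M.Tr (r k) (r (k+1)) ∨ M.EpiAny (r k) (r (k+1))

end ACMAS

/-! ### Isomorphisms and equivalent assignments -/

/-- `ι` is a witness for the isomorphism of the families `s` and `s'`:
a constant-preserving bijection between the active domains extended with the
constants, preserving all relations componentwise. -/
def IsWitness {D : Schema} {X C U U' : Type} (cst : C → U) (cst' : C → U')
    (ι : U → U') (s : X → Inst D U) (s' : X → Inst D U') : Prop :=
  Set.BijOn ι (adomF s ∪ Set.range cst) (adomF s' ∪ Set.range cst') ∧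
  (∀ c, ι (cst c) = cst' c) ∧
  ∀ (i : X) (r : D.Rel) (t : Fin (D.arity r) → U),
    (∀ j, t j ∈ adomF s ∪ Set.range cst) →
    (t ∈ (s i).rel r ↔ (fun j => ι (t j)) ∈ (s' i).rel r)

/-- Isomorphism of families of instances (in particular global states). -/
def Iso {D : Schema} {X C U U' : Type} (cst : C → U) (cst' : C → U')
    (s : X → Inst D U) (s' : X → Inst D U') : Prop :=
  ∃ ι, IsWitness cst cst' ι s s'

/-- Equivalent assignments for a set `V` of variables w.r.t. `s` and `s'`. -/
def EqAssign {D : Schema} {n : ℕ} {C U U' : Type} (cst : C → U) (cst' : C → U')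
    (V : Set ℕ) (σ : ℕ → U) (σ' : ℕ → U')
    (s : GState D n U) (s' : GState D n U') : Prop :=
  ∃ γ : U → U',
    Set.BijOn γ (adomF s ∪ Set.range cst ∪ σ '' V)
      (adomF s' ∪ Set.range cst' ∪ σ' '' V) ∧
    IsWitness cst cst' γ s s' ∧
    ∀ x ∈ V, σ' x = γ (σ x)

/-! ### Simulations and bisimulations -/

section Bisim

variable {D : Schema} {n : ℕ} {sig sig' : Fin (n+1) → AgentSig} {C U U' : Type}
  {Ag : ∀ i, Agent D (sig i) U} {Ag' : ∀ i, Agent D (sig' i) U'}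

/-- Simulation between two AC-MAS. -/
def IsSim (cst : C → U) (cst' : C → U')
    (M : ACMAS D sig Ag) (M' : ACMAS D sig' Ag')
    (R : GState D n U → GState D n U' → Prop) : Prop :=
  ∀ s s', R s s' →
    s ∈ M.S ∧ s' ∈ M'.S ∧ Iso cst cst' s s' ∧
    ∀ t, M.Tr s t → ∃ t', M'.Tr s' t' ∧ R t t'

/-- Bisimulation. -/
def IsBisim (cst : C → U) (cst' : C → U')
    (M : ACMAS D sig Ag) (M' : ACMAS D sig' Ag')
    (R : GState D n U → GState D n U' → Prop) : Prop :=
  IsSim cst cst' M M' R ∧ IsSim cst' cst M' M (fun s' s => R s s')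

/-- Bisimilarity of states. -/
def Bisimilar (cst : C → U) (cst' : C → U')
    (M : ACMAS D sig Ag) (M' : ACMAS D sig' Ag')
    (s : GState D n U) (s' : GState D n U') : Prop :=
  ∃ R, IsBisim cst cst' M M' R ∧ R s s'

/-- `P ≈ P'`: the two systems are bisimilar. -/
def BisimSys (cst : C → U) (cst' : C → U')
    (M : ACMAS D sig Ag) (M' : ACMAS D sig' Ag') : Prop :=
  Bisimilar cst cst' M M' M.s0 M'.s0

/-- ⊕-simulation. -/
def IsOSim (cst : C → U) (cst' : C → U')
    (M : ACMAS D sig Ag) (M' : ACMAS D sig' Ag')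
    (R : GState D n U → GState D n U' → Prop) : Prop :=
  ∀ s s', R s s' →
    s ∈ M.S ∧ s' ∈ M'.S ∧ Iso cst cst' s s' ∧
    (∀ t, M.Tr s t → ∃ t', M'.Tr s' t' ∧
        Iso cst cst' (oplusG s t) (oplusG s' t') ∧ R t t') ∧
    (∀ (t : GState D n U) (i : Fin n), M.Epi i.succ s t →
        ∃ t', M'.Epi i.succ s' t' ∧
          Iso cst cst' (oplusG s t) (oplusG s' t') ∧ R t t')

/-- ⊕-bisimulation. -/
def IsOBisim (cst : C → U) (cst' : C → U')
    (M : ACMAS D sig Ag) (M' : ACMAS D sig' Ag')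
    (R : GState D n U → GState D n U' → Prop) : Prop :=
  IsOSim cst cst' M M' R ∧ IsOSim cst' cst M' M (fun s' s => R s s')

/-- ⊕-bisimilarity of states. -/
def OBisimilar (cst : C → U) (cst' : C → U')
    (M : ACMAS D sig Ag) (M' : ACMAS D sig' Ag')
    (s : GState D n U) (s' : GState D n U') : Prop :=
  ∃ R, IsOBisim cst cst' M M' R ∧ R s s'

/-- The two systems are ⊕-bisimilar. -/
def OBisimSys (cst : C → U) (cst' : C → U')
    (M : ACMAS D sig Ag) (M' : ACMAS D sig' Ag') : Prop :=
  OBisimilar cst cst' M M' M.s0 M'.s0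

end Bisim

/-! ### Uniformity and boundedness -/

section Uniform

variable {D : Schema} {n : ℕ} {sig : Fin (n+1) → AgentSig} {C U : Type}
  {Ag : ∀ i, Agent D (sig i) U}

/-- Temporal condition (1) of uniformity. -/
def UniformT (cst : C → U) (M : ACMAS D sig Ag) : Prop :=
  ∀ s ∈ M.S, ∀ t ∈ M.S, ∀ s' ∈ M.S, ∀ (t' : GState D n U) (a : JAct sig U),
    t ∈ M.τ s a →
    ∀ ι : U → U, IsWitness cst cst ι (oplusG s t) (oplusG s' t') →
    ∀ ι' : U → U,
      (∀ u ∈ adomF (oplusG s t) ∪ Set.range cst, ι' u = ι u) →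
      Set.InjOn ι' (adomF (oplusG s t) ∪ Set.range cst ∪ actElems a) →
      (∀ c, ι' (cst c) = cst c) →
      t' ∈ M.τ s' (JAct.map ι' a)

/-- Epistemic condition (2) of uniformity. -/
def UniformE (cst : C → U) (M : ACMAS D sig Ag) : Prop :=
  ∀ s ∈ M.S, ∀ t ∈ M.S, ∀ s' ∈ M.S, ∀ (t' : GState D n U) (i : Fin n),
    M.Epi i.succ s t → Iso cst cst (oplusG s t) (oplusG s' t') →
    M.Epi i.succ s' t'

/-- Uniform AC-MAS. -/
def Uniform (cst : C → U) (M : ACMAS D sig Ag) : Prop :=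
  UniformT cst M ∧ UniformE cst M

/-- `b`-bounded AC-MAS: no reachable state has more than `b` distinct elements
in its active domain. -/
def BBounded (M : ACMAS D sig Ag) (b : ℕ) : Prop :=
  ∀ s ∈ M.S, (adomF s).Finite ∧ (adomF s).ncard ≤ b

end Uniform

/-- `N_Ag`: the sum over the agents of the maximal number of parameters of
their action types. -/
def NAg {n : ℕ} (sig : Fin (n+1) → AgentSig) : ℕ :=
  ∑ i, Finset.univ.sup (sig i).np

/-! ### Abstractions -/

section Abstraction

variable {D : Schema} {n : ℕ} {sig : Fin (n+1) → AgentSig} {C U U' : Type}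
  {Ag : ∀ i, Agent D (sig i) U} {Ag' : ∀ i, Agent D (sig i) U'}

/-- `A'` is the abstract agent corresponding to `A`, over the domain `U'`. -/
def IsAbstractAgent {g : AgentSig} (cst : C → U) (cst' : C → U')
    (A : Agent D g U) (A' : Agent D g U') : Prop :=
  ∀ (l' : Inst D U') (α' : GAct g U'), α' ∈ A'.Pr l' ↔
    ∃ l ∈ A.L, ∃ α ∈ A.Pr l, ∃ ι : U → U',
      IsWitness cst cst' ι (fun _ : PUnit => l) (fun _ : PUnit => l') ∧
      ∃ ι' : U → U',
        (∀ u ∈ l.adom ∪ Set.range cst, ι' u = ι u) ∧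
        Set.InjOn ι' (l.adom ∪ Set.range cst ∪ Set.range α.2) ∧
        α' = α.map ι'

/-- `M'` is an abstraction of `M` (over the abstract agents `Ag'`). -/
def IsAbstraction (cst : C → U) (cst' : C → U')
    (M : ACMAS D sig Ag) (M' : ACMAS D sig Ag') : Prop :=
  (∀ i, IsAbstractAgent cst cst' (Ag i) (Ag' i)) ∧
  Iso cst' cst M'.s0 M.s0 ∧
  ∀ (s' t' : GState D n U') (a' : JAct sig U'),
    t' ∈ M'.τ s' a' ↔
      ∃ s ∈ M.S, ∃ t ∈ M.S, ∃ a : JAct sig U, t ∈ M.τ s a ∧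
        ∃ ι : U → U', IsWitness cst cst' ι s s' ∧ IsWitness cst cst' ι t t' ∧
          ∃ ι' : U → U',
            (∀ u ∈ adomF s ∪ adomF t ∪ Set.range cst, ι' u = ι u) ∧
            Set.InjOn ι' (adomF s ∪ adomF t ∪ Set.range cst ∪ actElems a) ∧
            a' = JAct.map ι' a

/-- `M'` is a ⊕-abstraction of `M` (over the abstract agents `Ag'`).
The requirement `s0' = s0` is rendered, across the two interpretation
domains, as: the initial states are isomorphic and `adom(s0) ⊆ C`. -/
def IsOAbstraction (cst : C → U) (cst' : C → U')
    (M : ACMAS D sig Ag) (M' : ACMAS D sig Ag') : Prop :=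
  (∀ i, IsAbstractAgent cst cst' (Ag i) (Ag' i)) ∧
  (Iso cst cst' M.s0 M'.s0 ∧ adomF M.s0 ⊆ Set.range cst) ∧
  ∀ (s' t' : GState D n U') (a' : JAct sig U'),
    t' ∈ M'.τ s' a' ↔
      ∃ s ∈ M.S, ∃ t ∈ M.S, ∃ a : JAct sig U, t ∈ M.τ s a ∧
        ∃ ι : U → U',
          IsWitness cst cst' ι (oplusG s t) (oplusG s' t') ∧
          ∃ ι' : U → U',
            (∀ u ∈ adomF (oplusG s t) ∪ Set.range cst, ι' u = ι u) ∧
            Set.InjOn ι' (adomF (oplusG s t) ∪ Set.range cst ∪ actElems a) ∧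
            a' = JAct.map ι' a

end Abstraction

/-! ### Temporal-epistemic specification languages -/

/-- Sentence-atomic FO-CTL formulas. -/
inductive SAFOCTL (D : Schema) (C : Type) : Type where
  | atom : (ψ : FO D C) → ψ.free = ∅ → SAFOCTL D C
  | not : SAFOCTL D C → SAFOCTL D C
  | imp : SAFOCTL D C → SAFOCTL D C → SAFOCTL D C
  | ax : SAFOCTL D C → SAFOCTL D C
  | au : SAFOCTL D C → SAFOCTL D C → SAFOCTL D C
  | eu : SAFOCTL D C → SAFOCTL D C → SAFOCTL D C

/-- Satisfaction of SA-FO-CTL formulas at a global state. -/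
def SAFOCTL.sat {D : Schema} {C : Type} {n : ℕ} {sig : Fin (n+1) → AgentSig}
    {U : Type} {Ag : ∀ i, Agent D (sig i) U}
    (cst : C → U) (M : ACMAS D sig Ag) :
    SAFOCTL D C → GState D n U → Prop
  | .atom ψ _, s => ∀ σ, FO.sat cst (gInst s) σ ψ
  | .not φ, s => ¬ SAFOCTL.sat cst M φ s
  | .imp φ ψ, s => SAFOCTL.sat cst M φ s → SAFOCTL.sat cst M ψ s
  | .ax φ, s => ∀ r, M.IsRun r → r 0 = s → SAFOCTL.sat cst M φ (r 1)
  | .au φ ψ, s => ∀ r, M.IsRun r → r 0 = s →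
      ∃ k, SAFOCTL.sat cst M ψ (r k) ∧ ∀ j < k, SAFOCTL.sat cst M φ (r j)
  | .eu φ ψ, s => ∃ r, M.IsRun r ∧ r 0 = s ∧
      ∃ k, SAFOCTL.sat cst M ψ (r k) ∧ ∀ j < k, SAFOCTL.sat cst M φ (r j)

/-- `P ⊨ φ` for SA-FO-CTL. -/
def SAFOCTL.satM {D : Schema} {C : Type} {n : ℕ} {sig : Fin (n+1) → AgentSig}
    {U : Type} {Ag : ∀ i, Agent D (sig i) U}
    (cst : C → U) (M : ACMAS D sig Ag) (φ : SAFOCTL D C) : Prop :=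
  SAFOCTL.sat cst M φ M.s0

/-- FO-CTLK formulas, with epistemic operators for agents `1, …, n` and
common knowledge. -/
inductive FOCTLK (D : Schema) (C : Type) (n : ℕ) : Type where
  | atom : FO D C → FOCTLK D C n
  | not : FOCTLK D C n → FOCTLK D C n
  | imp : FOCTLK D C n → FOCTLK D C n → FOCTLK D C n
  | all : ℕ → FOCTLK D C n → FOCTLK D C n
  | ax : FOCTLK D C n → FOCTLK D C n
  | au : FOCTLK D C n → FOCTLK D C n → FOCTLK D C n
  | eu : FOCTLK D C n → FOCTLK D C n → FOCTLK D C n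
  | know : Fin n → FOCTLK D C n → FOCTLK D C n
  | ck : FOCTLK D C n → FOCTLK D C n

namespace FOCTLK

variable {D : Schema} {C : Type} {n : ℕ}

def free : FOCTLK D C n → Finset ℕ
  | .atom ψ => ψ.free
  | .not φ => φ.free
  | .imp φ ψ => φ.free ∪ ψ.free
  | .all x φ => φ.free.erase x
  | .ax φ => φ.free
  | .au φ ψ => φ.free ∪ ψ.free
  | .eu φ ψ => φ.free ∪ ψ.free
  | .know _ φ => φ.free
  | .ck φ => φ.free

def vars : FOCTLK D C n → Finset ℕ
  | .atom ψ => ψ.vars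
  | .not φ => φ.vars
  | .imp φ ψ => φ.vars ∪ ψ.vars
  | .all x φ => insert x φ.vars
  | .ax φ => φ.vars
  | .au φ ψ => φ.vars ∪ ψ.vars
  | .eu φ ψ => φ.vars ∪ ψ.vars
  | .know _ φ => φ.vars
  | .ck φ => φ.vars

/-- Satisfaction `(P, s, σ) ⊨ φ` of FO-CTLK formulas. -/
def sat {sig : Fin (n+1) → AgentSig} {U : Type} {Ag : ∀ i, Agent D (sig i) U}
    (cst : C → U) (M : ACMAS D sig Ag) :
    FOCTLK D C n → GState D n U → (ℕ → U) → Prop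
  | .atom ψ, s, σ => FO.sat cst (gInst s) σ ψ
  | .not φ, s, σ => ¬ sat cst M φ s σ
  | .imp φ ψ, s, σ => sat cst M φ s σ → sat cst M ψ s σ
  | .all x φ, s, σ => ∀ u ∈ adomF s, sat cst M φ s (Function.update σ x u)
  | .ax φ, s, σ => ∀ r, M.IsRun r → r 0 = s → sat cst M φ (r 1) σ
  | .au φ ψ, s, σ => ∀ r, M.IsRun r → r 0 = s →
      ∃ k, sat cst M ψ (r k) σ ∧ ∀ j < k, sat cst M φ (r j) σ
  | .eu φ ψ, s, σ => ∃ r, M.IsRun r ∧ r 0 = s ∧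
      ∃ k, sat cst M ψ (r k) σ ∧ ∀ j < k, sat cst M φ (r j) σ
  | .know i φ, s, σ => ∀ t, M.Epi i.succ s t → sat cst M φ t σ
  | .ck φ, s, σ => ∀ t, Relation.TransGen M.EpiAny s t → sat cst M φ t σ

/-- `P ⊨ φ` for FO-CTLK: satisfaction at the initial state under every
assignment. -/
def satM {sig : Fin (n+1) → AgentSig} {U : Type} {Ag : ∀ i, Agent D (sig i) U}
    (cst : C → U) (M : ACMAS D sig Ag) (φ : FOCTLK D C n) : Prop :=
  ∀ σ : ℕ → U, sat cst M φ M.s0 σ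

end FOCTLK

/-- FO-ECTLK: the existential fragment. -/
inductive FOECTLK (D : Schema) (C : Type) (n : ℕ) : Type where
  | atom : FO D C → FOECTLK D C n
  | and : FOECTLK D C n → FOECTLK D C n → FOECTLK D C n
  | or : FOECTLK D C n → FOECTLK D C n → FOECTLK D C n
  | all : ℕ → FOECTLK D C n → FOECTLK D C n
  | ex : ℕ → FOECTLK D C n → FOECTLK D C n
  | enext : FOECTLK D C n → FOECTLK D C n
  | eu : FOECTLK D C n → FOECTLK D C n → FOECTLK D C n
  | dknow : Fin n → FOECTLK D C n → FOECTLK D C n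
  | dck : FOECTLK D C n → FOECTLK D C n

/-- Satisfaction of FO-ECTLK formulas. -/
def FOECTLK.sat {D : Schema} {C : Type} {n : ℕ} {sig : Fin (n+1) → AgentSig}
    {U : Type} {Ag : ∀ i, Agent D (sig i) U}
    (cst : C → U) (M : ACMAS D sig Ag) :
    FOECTLK D C n → GState D n U → (ℕ → U) → Prop
  | .atom ψ, s, σ => FO.sat cst (gInst s) σ ψ
  | .and φ ψ, s, σ => FOECTLK.sat cst M φ s σ ∧ FOECTLK.sat cst M ψ s σ
  | .or φ ψ, s, σ => FOECTLK.sat cst M φ s σ ∨ FOECTLK.sat cst M ψ s σ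
  | .all x φ, s, σ => ∀ u ∈ adomF s, FOECTLK.sat cst M φ s (Function.update σ x u)
  | .ex x φ, s, σ => ∃ u ∈ adomF s, FOECTLK.sat cst M φ s (Function.update σ x u)
  | .enext φ, s, σ => ∃ r, M.IsRun r ∧ r 0 = s ∧ FOECTLK.sat cst M φ (r 1) σ
  | .eu φ ψ, s, σ => ∃ r, M.IsRun r ∧ r 0 = s ∧
      ∃ k, FOECTLK.sat cst M ψ (r k) σ ∧ ∀ j < k, FOECTLK.sat cst M φ (r j) σ
  | .dknow i φ, s, σ => ∃ t, M.Epi i.succ s t ∧ FOECTLK.sat cst M φ t σ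
  | .dck φ, s, σ => ∃ t, Relation.TransGen M.EpiAny s t ∧ FOECTLK.sat cst M φ t σ

/-- `P ⊨ φ` for FO-ECTLK. -/
def FOECTLK.satM {D : Schema} {C : Type} {n : ℕ} {sig : Fin (n+1) → AgentSig}
    {U : Type} {Ag : ∀ i, Agent D (sig i) U}
    (cst : C → U) (M : ACMAS D sig Ag) (φ : FOECTLK D C n) : Prop :=
  ∀ σ : ℕ → U, FOECTLK.sat cst M φ M.s0 σ

/-- `Mb` is the `b`-restriction of `M`. -/
def IsBRestriction {D : Schema} {n : ℕ} {sig : Fin (n+1) → AgentSig} {U : Type}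
    {Ag : ∀ i, Agent D (sig i) U} (Mb M : ACMAS D sig Ag) (b : ℕ) : Prop :=
  Mb.s0 = M.s0 ∧
  Mb.S = { s ∈ M.S | (adomF s).Finite ∧ (adomF s).ncard ≤ b } ∧
  ∀ s a, Mb.τ s a = { t ∈ M.τ s a | s ∈ Mb.S ∧ t ∈ Mb.S }

/-! ### Artifact-centric programs -/

/-- A declarative artifact-centric program. -/
structure ACProgram (D : Schema) (C : Type) {n : ℕ} (sig : Fin (n+1) → AgentSig) where
  /-- local database schemas, as sets of relation symbols -/
  locRel : Fin (n+1) → Set D.Rel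
  locDisj : ∀ i j, i ≠ j → Disjoint (locRel i) (locRel j)
  /-- initial local states; their values are constants -/
  l0 : ∀ _ : Fin (n+1), Inst D C
  l0_loc : ∀ i r, r ∉ locRel i → (l0 i).rel r = ∅
  /-- preconditions: FO-formulas over the local schema whose free variables
  are among the action parameters -/
  pre : ∀ i, (sig i).Act → FO D C
  /-- postconditions: FO-formulas over the global schema and its primed copy -/
  post : ∀ i, (sig i).Act → FO D.double C
  pre_free : ∀ i a, ↑(pre i a).free ⊆ { x : ℕ | x < (sig i).np a }
  post_free : ∀ i a, ↑(post i a).free ⊆ { x : ℕ | x < (sig i).np a }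
  pre_loc : ∀ i a, (pre i a).UsesOnly (locRel i)

namespace ACProgram

variable {D : Schema} {C : Type} {n : ℕ} {sig : Fin (n+1) → AgentSig}

/-- The constants mentioned in the program. -/
def progConsts (P : ACProgram D C sig) : Set C :=
  (⋃ i, (P.l0 i).adom) ∪
  ⋃ i, ⋃ a : (sig i).Act, ((P.pre i a).consts ∪ (P.post i a).consts)

/-- Ground values of the postcondition parameters of a joint ground action. -/
def postElems (P : ACProgram D C sig) {U : Type} (a : JAct sig U) : Set U :=
  { u | ∃ (i : Fin (n+1)) (j : Fin ((sig i).np (a i).1)),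
      (j : ℕ) ∈ (P.post i (a i).1).free ∧ (a i).2 j = u }

/-- The agent induced by the program for index `i`. -/
def InducedAgent {U : Type} (cst : C → U) (P : ACProgram D C sig) (i : Fin (n+1))
    (A : Agent D (sig i) U) : Prop :=
  A.L = { l : Inst D U | ∀ r, r ∉ P.locRel i → l.rel r = ∅ } ∧
  ∀ (l : Inst D U) (α : GAct (sig i) U), α ∈ A.Pr l ↔
    ∀ σ : ℕ → U, (∀ j : Fin ((sig i).np α.1), σ (j : ℕ) = α.2 j) →
      FO.sat cst l σ (P.pre i α.1)

/-- The transitions induced by the program. -/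
def InducedTrans {U : Type} (cst : C → U) (P : ACProgram D C sig)
    (s t : GState D n U) (a : JAct sig U) : Prop :=
  (∀ i, ∀ σ : ℕ → U, (∀ j : Fin ((sig i).np (a i).1), σ (j : ℕ) = (a i).2 j) →
      FO.sat cst (s i) σ (P.pre i (a i).1)) ∧
  adomF t ⊆ adomF s ∪ P.postElems a ∪ cst '' (⋃ i, (P.post i (a i).1).consts) ∧
  (∀ i, ∀ σ : ℕ → U, (∀ j : Fin ((sig i).np (a i).1), σ (j : ℕ) = (a i).2 j) →
      FO.sat cst ((gInst s).oplus (gInst t)) σ (P.post i (a i).1))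

/-- `M` is the AC-MAS induced by the program `P` (the transition relation is
assumed to be serial). -/
def InducedACMAS {U : Type} (cst : C → U) (P : ACProgram D C sig)
    (Ag : ∀ i, Agent D (sig i) U) (M : ACMAS D sig Ag) : Prop :=
  (∀ i, P.InducedAgent cst i (Ag i)) ∧
  M.s0 = (fun i => (P.l0 i).map cst) ∧
  (∀ s t a, t ∈ M.τ s a ↔ P.InducedTrans cst s t a) ∧
  M.Std

end ACProgram

/-! ### Auxiliary lemmas for Statement 3 -/

section Aux

variable {D : Schema} {n : ℕ} {C U U' : Type}

lemma adom_gInst (s : GState D n U) : (gInst s).adom = adomF s := by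
  ext u
  constructor
  · rintro ⟨r, t, ht, j, rfl⟩
    obtain ⟨i, hi⟩ := Set.mem_iUnion.mp ht
    exact Set.mem_iUnion.mpr ⟨i, r, t, hi, j, rfl⟩
  · intro h
    obtain ⟨i, hi⟩ := Set.mem_iUnion.mp h
    obtain ⟨r, t, ht, j, rfl⟩ := hi
    exact ⟨r, t, Set.mem_iUnion.mpr ⟨i, ht⟩, j, rfl⟩

lemma mem_adomF {X : Type} {s : X → Inst D U} {i : X} {r : D.Rel}
    {t : Fin (D.arity r) → U} (ht : t ∈ (s i).rel r) (j : Fin (D.arity r)) :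
    t j ∈ adomF s :=
  Set.mem_iUnion.mpr ⟨i, r, t, ht, j, rfl⟩

variable {cst : C → U} {cst' : C → U'}

lemma witness_mapsTo {ι : U → U'} {s : GState D n U} {s' : GState D n U'}
    (hw : IsWitness cst cst' ι s s') :
    ∀ u ∈ adomF s, ι u ∈ adomF s' := by
  intro u hu
  obtain ⟨i, hi⟩ := Set.mem_iUnion.mp hu
  obtain ⟨r, t, ht, j, rfl⟩ := hi
  have hc : ∀ j', t j' ∈ adomF s ∪ Set.range cst :=
    fun j' => Or.inl (mem_adomF ht j')
  have := (hw.2.2 i r t hc).mp ht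
  exact mem_adomF this j

lemma witness_surjOn {ι : U → U'} {s : GState D n U} {s' : GState D n U'}
    (hw : IsWitness cst cst' ι s s') :
    ∀ u' ∈ adomF s', ∃ u ∈ adomF s, ι u = u' := by
  intro u' hu'
  obtain ⟨i, hi⟩ := Set.mem_iUnion.mp hu'
  obtain ⟨r, t', ht', j, rfl⟩ := hi
  have hc' : ∀ j', t' j' ∈ adomF s' ∪ Set.range cst' :=
    fun j' => Or.inl (mem_adomF ht' j')
  have hsurj := hw.1.2.2
  choose t htmem htval using fun j' => hsurj (hc' j')
  have hrel : (fun j' => ι (t j')) ∈ (s' i).rel r := by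
    have : (fun j' => ι (t j')) = t' := funext htval
    rw [this]; exact ht'
  have hmem : t ∈ (s i).rel r := (hw.2.2 i r t htmem).mpr hrel
  exact ⟨t j, mem_adomF hmem j, htval j⟩

lemma term_transfer {ι : U → U'} {s : GState D n U} {s' : GState D n U'}
    (hw : IsWitness cst cst' ι s s') (t : Term C) (σ : ℕ → U) (σ' : ℕ → U')
    (h : ∀ x ∈ t.varsF, σ x ∈ adomF s ∪ Set.range cst ∧ σ' x = ι (σ x)) :
    Term.val cst σ t ∈ adomF s ∪ Set.range cst ∧
      Term.val cst' σ' t = ι (Term.val cst σ t) := by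
  cases t with
  | inl x => exact h x (by simp [Term.varsF])
  | inr c => exact ⟨Or.inr ⟨c, rfl⟩, (hw.2.1 c).symm⟩

lemma fo_sat_iff {ι : U → U'} {s : GState D n U} {s' : GState D n U'}
    (hw : IsWitness cst cst' ι s s') :
    ∀ (ψ : FO D C) (σ : ℕ → U) (σ' : ℕ → U'),
    (∀ x ∈ ψ.free, σ x ∈ adomF s ∪ Set.range cst ∧ σ' x = ι (σ x)) →
    (FO.sat cst (gInst s) σ ψ ↔ FO.sat cst' (gInst s') σ' ψ) := by
  intro ψ
  induction ψ with
  | eq t₁ t₂ =>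
    intro σ σ' h
    have h₁ := term_transfer hw t₁ σ σ' fun x hx =>
      h x (Finset.mem_union_left _ hx)
    have h₂ := term_transfer hw t₂ σ σ' fun x hx =>
      h x (Finset.mem_union_right _ hx)
    simp only [FO.sat, h₁.2, h₂.2]
    constructor
    · intro he; rw [he]
    · intro he; exact hw.1.2.1 h₁.1 h₂.1 he
  | rel r ts =>
    intro σ σ' h
    have hts : ∀ j, Term.val cst σ (ts j) ∈ adomF s ∪ Set.range cst ∧
        Term.val cst' σ' (ts j) = ι (Term.val cst σ (ts j)) := by
      intro j
      refine term_transfer hw (ts j) σ σ' fun x hx => h x ?_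
      exact Finset.mem_biUnion.mpr ⟨j, Finset.mem_univ j, hx⟩
    have htup : (fun j => Term.val cst' σ' (ts j)) =
        fun j => ι (Term.val cst σ (ts j)) := funext fun j => (hts j).2
    simp only [FO.sat, gInst, htup, Set.mem_iUnion]
    exact exists_congr fun i =>
      hw.2.2 i r (fun j => Term.val cst σ (ts j)) fun j => (hts j).1
  | not ψ ih =>
    intro σ σ' h
    simp only [FO.sat]
    rw [ih σ σ' h]
  | imp ψ₁ ψ₂ ih₁ ih₂ =>
    intro σ σ' h
    simp only [FO.sat]
    rw [ih₁ σ σ' fun x hx => h x (Finset.mem_union_left _ hx),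
        ih₂ σ σ' fun x hx => h x (Finset.mem_union_right _ hx)]
  | all x ψ ih =>
    intro σ σ' h
    simp only [FO.sat, adom_gInst]
    constructor
    · intro hall u' hu'
      obtain ⟨u, hu, rfl⟩ := witness_surjOn hw u' hu'
      refine (ih (Function.update σ x u) (Function.update σ' x (ι u)) ?_).mp
        (hall u hu)
      intro y hy
      by_cases hyx : y = x
      · subst hyx; simp [Function.update_self, Or.inl hu]
      · rw [Function.update_of_ne hyx, Function.update_of_ne hyx]
        exact h y (Finset.mem_erase.mpr ⟨hyx, hy⟩)
    · intro hall u hu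
      refine (ih (Function.update σ x u) (Function.update σ' x (ι u)) ?_).mpr
        (hall (ι u) (witness_mapsTo hw u hu))
      intro y hy
      by_cases hyx : y = x
      · subst hyx; simp [Function.update_self, Or.inl hu]
      · rw [Function.update_of_ne hyx, Function.update_of_ne hyx]
        exact h y (Finset.mem_erase.mpr ⟨hyx, hy⟩)

end Aux

section Runs

variable {D : Schema} {n : ℕ} {sig sig' : Fin (n+1) → AgentSig} {C U U' : Type}
  {Ag : ∀ i, Agent D (sig i) U} {Ag' : ∀ i, Agent D (sig' i) U'}

lemma exists_run_from (M : ACMAS D sig Ag) (hM : M.Std) {t : GState D n U}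
    (ht : t ∈ M.S) : ∃ r, M.IsRun r ∧ r 0 = t := by
  have step : ∀ u : {x // x ∈ M.S}, ∃ v : {x // x ∈ M.S}, M.Tr u.1 v.1 := by
    rintro ⟨u, hu⟩
    obtain ⟨v, a, hv⟩ := hM.1 u hu
    exact ⟨⟨v, M.tau_closed u hu a hv⟩, a, hv⟩
  choose f hf using step
  refine ⟨fun k => (f^[k] ⟨t, ht⟩).1, ⟨fun k => (f^[k] ⟨t, ht⟩).2, fun k => ?_⟩, rfl⟩
  show M.Tr (f^[k] ⟨t, ht⟩).1 (f^[k+1] ⟨t, ht⟩).1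
  rw [Function.iterate_succ_apply']
  exact hf _

lemma run_lift {cst : C → U} {cst' : C → U'}
    {M : ACMAS D sig Ag} {M' : ACMAS D sig' Ag'}
    {R : GState D n U → GState D n U' → Prop}
    (hsim : IsSim cst cst' M M' R) {r : ℕ → GState D n U}
    (hr : M.IsRun r) {s' : GState D n U'} (h0 : R (r 0) s') :
    ∃ r', M'.IsRun r' ∧ r' 0 = s' ∧ ∀ k, R (r k) (r' k) := by
  have step : ∀ k (t' : GState D n U'), R (r k) t' →
      ∃ u', M'.Tr t' u' ∧ R (r (k+1)) u' :=
    fun k t' h => (hsim _ _ h).2.2.2 _ (hr.2 k)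
  choose g hg1 hg2 using step
  let F : ∀ k, {t' // R (r k) t'} → {t' // R (r (k+1)) t'} :=
    fun k p => ⟨g k p.1 p.2, hg2 k p.1 p.2⟩
  let seq : ∀ k, {t' // R (r k) t'} := fun k => Nat.rec ⟨s', h0⟩ F k
  refine ⟨fun k => (seq k).1, ⟨fun k => (hsim _ _ (seq k).2).2.1, fun k => ?_⟩,
    rfl, fun k => (seq k).2⟩
  exact hg1 k (seq k).1 (seq k).2

end Runs

section Main

variable {D : Schema} {n : ℕ} {sig sig' : Fin (n+1) → AgentSig} {C U U' : Type}
  {Ag : ∀ i, Agent D (sig i) U} {Ag' : ∀ i, Agent D (sig' i) U'}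

lemma bisim_sat {cst : C → U} {cst' : C → U'}
    {M : ACMAS D sig Ag} {M' : ACMAS D sig' Ag'}
    {R : GState D n U → GState D n U' → Prop}
    (hR : IsBisim cst cst' M M' R) (hMstd : M.Std) (hM'std : M'.Std) :
    ∀ (φ : SAFOCTL D C) (s : GState D n U) (s' : GState D n U'), R s s' →
      (SAFOCTL.sat cst M φ s ↔ SAFOCTL.sat cst' M' φ s') := by
  intro φ
  induction φ with
  | atom ψ hfree =>
    intro s s' hss'
    obtain ⟨ι, hw⟩ := (hR.1 s s' hss').2.2.1
    obtain ⟨κ, hκ⟩ := (hR.2 s' s hss').2.2.1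
    have hvac : ∀ (σ : ℕ → U) (σ' : ℕ → U'),
        ∀ x ∈ ψ.free, σ x ∈ adomF s ∪ Set.range cst ∧ σ' x = ι (σ x) := by
      intro σ σ' x hx
      rw [hfree] at hx
      exact absurd hx (Finset.notMem_empty x)
    simp only [SAFOCTL.sat]
    constructor
    · intro h σ'
      exact (fo_sat_iff hw ψ (κ ∘ σ') σ' (hvac _ _)).mp (h _)
    · intro h σ
      exact (fo_sat_iff hw ψ σ (ι ∘ σ) (hvac _ _)).mpr (h _)
  | not φ ih =>
    intro s s' hss'
    simp only [SAFOCTL.sat]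
    rw [ih s s' hss']
  | imp φ ψ ihφ ihψ =>
    intro s s' hss'
    simp only [SAFOCTL.sat]
    rw [ihφ s s' hss', ihψ s s' hss']
  | ax φ ih =>
    intro s s' hss'
    simp only [SAFOCTL.sat]
    constructor
    · intro h r' hr' h0'
      have htr' : M'.Tr s' (r' 1) := h0' ▸ hr'.2 0
      obtain ⟨t, htr, hRt⟩ := (hR.2 s' s hss').2.2.2 _ htr'
      obtain ⟨rr, hrr, hrr0⟩ := exists_run_from M hMstd (hR.1 t (r' 1) hRt).1
      let r : ℕ → GState D n U := fun k => Nat.casesOn k s fun k => rr k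
      have hrun : M.IsRun r := by
        constructor
        · intro k
          cases k with
          | zero => exact (hR.1 s s' hss').1
          | succ k => exact hrr.1 k
        · intro k
          cases k with
          | zero => show M.Tr s (rr 0); rw [hrr0]; exact htr
          | succ k => exact hrr.2 k
      have hs := h r hrun rfl
      have h1 : r 1 = t := hrr0
      rw [h1] at hs
      exact (ih t (r' 1) hRt).mp hs
    · intro h r hr h0
      have htr : M.Tr s (r 1) := h0 ▸ hr.2 0
      obtain ⟨t', htr', hRt⟩ := (hR.1 s s' hss').2.2.2 _ htr
      obtain ⟨rr, hrr, hrr0⟩ := exists_run_from M' hM'std (hR.1 (r 1) t' hRt).2.1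
      let r' : ℕ → GState D n U' := fun k => Nat.casesOn k s' fun k => rr k
      have hrun : M'.IsRun r' := by
        constructor
        · intro k
          cases k with
          | zero => exact (hR.1 s s' hss').2.1
          | succ k => exact hrr.1 k
        · intro k
          cases k with
          | zero => show M'.Tr s' (rr 0); rw [hrr0]; exact htr'
          | succ k => exact hrr.2 k
      have hs := h r' hrun rfl
      have h1 : r' 1 = t' := hrr0
      rw [h1] at hs
      exact (ih (r 1) t' hRt).mpr hs
  | au φ ψ ihφ ihψ =>
    intro s s' hss'
    simp only [SAFOCTL.sat]
    constructor
    · intro h r' hr' h0'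
      have h0R : (fun s' s => R s s') (r' 0) s := h0' ▸ hss'
      obtain ⟨r, hrun, hr0, hrel⟩ := run_lift hR.2 hr' h0R
      obtain ⟨k, hk, hj⟩ := h r hrun hr0
      exact ⟨k, (ihψ (r k) (r' k) (hrel k)).mp hk,
        fun j hjk => (ihφ (r j) (r' j) (hrel j)).mp (hj j hjk)⟩
    · intro h r hr h0
      have h0R : R (r 0) s' := h0 ▸ hss'
      obtain ⟨r', hrun', hr0', hrel⟩ := run_lift hR.1 hr h0R
      obtain ⟨k, hk, hj⟩ := h r' hrun' hr0'
      exact ⟨k, (ihψ (r k) (r' k) (hrel k)).mpr hk,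
        fun j hjk => (ihφ (r j) (r' j) (hrel j)).mpr (hj j hjk)⟩
  | eu φ ψ ihφ ihψ =>
    intro s s' hss'
    simp only [SAFOCTL.sat]
    constructor
    · rintro ⟨r, hr, h0, k, hk, hj⟩
      have h0R : R (r 0) s' := h0 ▸ hss'
      obtain ⟨r', hrun', hr0', hrel⟩ := run_lift hR.1 hr h0R
      exact ⟨r', hrun', hr0', k, (ihψ (r k) (r' k) (hrel k)).mp hk,
        fun j hjk => (ihφ (r j) (r' j) (hrel j)).mp (hj j hjk)⟩
    · rintro ⟨r', hr', h0', k, hk, hj⟩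
      have h0R : (fun s' s => R s s') (r' 0) s := h0' ▸ hss'
      obtain ⟨r, hrun, hr0, hrel⟩ := run_lift hR.2 hr' h0R
      exact ⟨r, hrun, hr0, k, (ihψ (r k) (r' k) (hrel k)).mpr hk,
        fun j hjk => (ihφ (r j) (r' j) (hrel j)).mpr (hj j hjk)⟩

end Main

/-! ### STATEMENT 3 -/

theorem statement3
    {D : Schema} {C : Type} [Fintype C] {n : ℕ}
    {sig sig' : Fin (n+1) → AgentSig} {U U' : Type}
    (cst : C → U) (cst' : C → U')
    (hcst : Function.Injective cst) (hcst' : Function.Injective cst')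
    {Ag : ∀ i, Agent D (sig i) U} {Ag' : ∀ i, Agent D (sig' i) U'}
    (M : ACMAS D sig Ag) (M' : ACMAS D sig' Ag')
    (hM : M.Std) (hM' : M'.Std)
    (hPP' : BisimSys cst cst' M M')
    (φ : SAFOCTL D C) :
    SAFOCTL.satM cst M φ ↔ SAFOCTL.satM cst' M' φ := by
  obtain ⟨R, hbis, h0⟩ := hPP'
  exact bisim_sat hbis hM hM' φ M.s0 M'.s0 h0
end

section
/- Let P be a uniform AC-MAS. Then for all global states s, s' ∈ S, if s ≃ s' (isomorphic) then s ≈ s' (⊕-bisimilar). -/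
/-!  Common formalisation of artifact-centric multi-agent systems (AC-MAS). -/

open Set

section Helpers

variable {D : Schema} {n : ℕ} {U : Type}

lemma Inst.adom_finite (I : Inst D U) : I.adom.Finite := by
  have h : I.adom = ⋃ r : D.Rel, ⋃ t ∈ I.rel r, Set.range t := by
    ext u
    simp only [Inst.adom, Set.mem_setOf_eq, Set.mem_iUnion, Set.mem_range]
    tauto
  rw [h]
  exact Set.finite_iUnion fun r =>
    Set.Finite.biUnion (I.finite r) fun t _ => Set.finite_range t

lemma adomF_finite {X : Type} [Finite X] (s : X → Inst D U) : (adomF s).Finite :=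
  Set.finite_iUnion fun i => (s i).adom_finite

lemma Inst.adom_map {V : Type} (f : U → V) (I : Inst D U) :
    (I.map f).adom = f '' I.adom := by
  ext u
  simp only [Inst.adom, Inst.map, Set.mem_image, Set.mem_setOf_eq]
  constructor
  · rintro ⟨r, t, ⟨t0, ht0, rfl⟩, j, rfl⟩
    exact ⟨t0 j, ⟨r, t0, ht0, j, rfl⟩, rfl⟩
  · rintro ⟨v, ⟨r, t, ht, j, rfl⟩, rfl⟩
    exact ⟨r, f ∘ t, ⟨t, ht, rfl⟩, j, rfl⟩

lemma adomF_map {V : Type} (f : U → V) (s : GState D n U) :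
    adomF (fun i => (s i).map f) = f '' adomF s := by
  simp only [adomF, Inst.adom_map, Set.image_iUnion]

lemma Inst.adom_oplus (I J : Inst D U) : (I.oplus J).adom = I.adom ∪ J.adom := by
  ext u
  simp only [Inst.adom, Inst.oplus, Set.mem_union, Set.mem_setOf_eq]
  constructor
  · rintro ⟨r, t, ht, j, rfl⟩
    cases r with
    | inl r₀ => exact Or.inl ⟨r₀, t, ht, j, rfl⟩
    | inr r₀ => exact Or.inr ⟨r₀, t, ht, j, rfl⟩
  · rintro (⟨r, t, ht, j, rfl⟩ | ⟨r, t, ht, j, rfl⟩)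
    · exact ⟨Sum.inl r, t, ht, j, rfl⟩
    · exact ⟨Sum.inr r, t, ht, j, rfl⟩

lemma adomF_oplusG (s t : GState D n U) :
    adomF (oplusG s t) = adomF s ∪ adomF t := by
  simp only [adomF, oplusG, Inst.adom_oplus]
  rw [Set.iUnion_union_distrib]

lemma mem_adomF_of_rel {s : GState D n U} {i : Fin (n+1)} {r : D.Rel}
    {t : Fin (D.arity r) → U} (ht : t ∈ (s i).rel r) (j : Fin (D.arity r)) :
    t j ∈ adomF s :=
  Set.mem_iUnion.2 ⟨i, r, t, ht, j, rfl⟩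

/-- Extend a bijection between finite sets to a permutation of the whole domain. -/
lemma exists_perm_extend {A B : Set U} (hA : A.Finite) {ι : U → U}
    (h : Set.BijOn ι A B) : ∃ π : U ≃ U, ∀ a ∈ A, π a = ι a := by
  classical
  have hf : Function.Injective (fun x : A => ι x) := fun x y hxy =>
    Subtype.ext (h.injOn x.2 y.2 hxy)
  let f : A ↪ U := ⟨fun x => ι x, hf⟩
  rcases finite_or_infinite U with hU | hU
  · obtain ⟨g, hg⟩ := Cardinal.extend_function_finite f ⟨Equiv.refl U⟩
    exact ⟨g, fun a ha => hg ⟨a, ha⟩⟩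
  · have hlt : Cardinal.mk A < Cardinal.mk U :=
      lt_of_lt_of_le hA.lt_aleph0 (Cardinal.aleph0_le_mk U)
    obtain ⟨g, hg⟩ := Cardinal.extend_function_of_lt f hlt ⟨Equiv.refl U⟩
    exact ⟨g, fun a ha => hg ⟨a, ha⟩⟩

end Helpers

section Witness

variable {D : Schema} {n : ℕ} {U : Type} {C : Type} [Fintype C]

/-- Upgrade an isomorphism witness between global states to a permutation of `U`. -/
lemma iso_exists_perm {cst : C → U} {s s' : GState D n U}
    (h : Iso cst cst s s') : ∃ π : U ≃ U, IsWitness cst cst (⇑π) s s' := by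
  obtain ⟨ι, hbij, hc, hrel⟩ := h
  have hfin : (adomF s ∪ Set.range cst).Finite :=
    (adomF_finite s).union (Set.finite_range cst)
  obtain ⟨π, hπ⟩ := exists_perm_extend hfin hbij
  have heq : Set.EqOn (⇑π) ι (adomF s ∪ Set.range cst) := fun a ha => hπ a ha
  refine ⟨π, hbij.congr heq.symm, fun c => ?_, fun i r t ht => ?_⟩
  · rw [hπ _ (Or.inr ⟨c, rfl⟩)]; exact hc c
  · have : (fun j => π (t j)) = fun j => ι (t j) :=
      funext fun j => hπ _ (ht j)
    rw [this]; exact hrel i r t ht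

/-- If `π` is a permutation witnessing `s ≃ s'`, then it witnesses
`s ⊕ t ≃ s' ⊕ (t.map π)`. -/
lemma oplus_witness {cst : C → U} {s s' : GState D n U} (π : U ≃ U)
    (hw : IsWitness cst cst (⇑π) s s') (t : GState D n U) :
    IsWitness cst cst (⇑π) (oplusG s t) (oplusG s' (fun i => (t i).map ⇑π)) := by
  obtain ⟨hbij, hc, hrel⟩ := hw
  have himg : π '' (adomF s ∪ Set.range cst) = adomF s' ∪ Set.range cst :=
    hbij.image_eq
  have hA : adomF (oplusG s t) = adomF s ∪ adomF t := adomF_oplusG s t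
  have hA' : adomF (oplusG s' fun i => (t i).map ⇑π) =
      adomF s' ∪ π '' adomF t := by
    rw [adomF_oplusG, adomF_map]
  have hmem_iff : ∀ u, u ∈ adomF s ∪ Set.range cst ↔
      π u ∈ adomF s' ∪ Set.range cst := by
    intro u
    constructor
    · intro hu; rw [← himg]; exact ⟨u, hu, rfl⟩
    · intro hu; rw [← himg] at hu
      obtain ⟨v, hv, hvu⟩ := hu
      rwa [← π.injective hvu]
  refine ⟨?_, hc, fun i r tp htp => ?_⟩
  · have : BijOn (⇑π) (adomF (oplusG s t) ∪ Set.range cst)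
        (π '' (adomF (oplusG s t) ∪ Set.range cst)) :=
      π.injective.injOn.bijOn_image
    convert this using 1
    rw [hA, hA', Set.image_union, Set.image_union,
      Set.union_right_comm (adomF s'), Set.union_right_comm (⇑π '' adomF s),
      ← Set.image_union, himg]
  · cases r with
    | inl r₀ =>
      by_cases hall : ∀ j, tp j ∈ adomF s ∪ Set.range cst
      · exact hrel i r₀ tp hall
      · push_neg at hall
        obtain ⟨j, hj⟩ := hall
        constructor
        · intro hmem
          exact absurd (Or.inl (mem_adomF_of_rel (s := s) hmem j)) hj
        · intro hmem
          have hm : π (tp j) ∈ adomF s' ∪ Set.range cst :=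
            Or.inl (mem_adomF_of_rel (s := s') hmem j)
          exact absurd ((hmem_iff (tp j)).2 hm) hj
    | inr r₀ =>
      show tp ∈ (t i).rel r₀ ↔ _ ∈ ((t i).map ⇑π).rel r₀
      constructor
      · intro hmem; exact ⟨tp, hmem, rfl⟩
      · rintro ⟨tq, hq, hqe⟩
        have : tq = tp := funext fun j => π.injective (congrFun hqe j)
        rwa [this] at hq

/-- A permutation fixing constants witnesses `t ≃ t.map π`. -/
lemma map_witness {cst : C → U} (π : U ≃ U) (hc : ∀ c, π (cst c) = cst c)
    (t : GState D n U) :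
    IsWitness cst cst (⇑π) t (fun i => (t i).map ⇑π) := by
  refine ⟨?_, hc, fun i r tp htp => ?_⟩
  · have : BijOn (⇑π) (adomF t ∪ Set.range cst)
        (π '' (adomF t ∪ Set.range cst)) := π.injective.injOn.bijOn_image
    convert this using 1
    rw [adomF_map, Set.image_union]
    congr 1
    ext u
    constructor
    · rintro ⟨c, rfl⟩; exact ⟨cst c, ⟨c, rfl⟩, hc c⟩
    · rintro ⟨v, ⟨c, rfl⟩, rfl⟩; exact ⟨c, (hc c).symm⟩
  · show tp ∈ (t i).rel r ↔ _ ∈ ((t i).map ⇑π).rel r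
    constructor
    · intro hmem; exact ⟨tp, hmem, rfl⟩
    · rintro ⟨tq, hq, hqe⟩
      have : tq = tp := funext fun j => π.injective (congrFun hqe j)
      rwa [this] at hq

/-- Symmetry of isomorphism. -/
lemma iso_symm {cst : C → U} {s s' : GState D n U}
    (h : Iso cst cst s s') : Iso cst cst s' s := by
  obtain ⟨π, hbij, hc, hrel⟩ := iso_exists_perm h
  have hInv : Set.InvOn (⇑π) (⇑π.symm) (adomF s' ∪ Set.range cst)
      (adomF s ∪ Set.range cst) :=
    ⟨fun x _ => π.apply_symm_apply x, fun x _ => π.symm_apply_apply x⟩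
  have hbij' : Set.BijOn (⇑π.symm) (adomF s' ∪ Set.range cst)
      (adomF s ∪ Set.range cst) := Set.BijOn.symm hInv hbij
  refine ⟨⇑π.symm, hbij', fun c => π.symm_apply_eq.2 (hc c).symm,
    fun i r tp htp => ?_⟩
  have hq : ∀ j, π.symm (tp j) ∈ adomF s ∪ Set.range cst := fun j =>
    hbij'.mapsTo (htp j)
  have h2 := hrel i r (fun j => π.symm (tp j)) hq
  have h3 : (fun j => π (π.symm (tp j))) = tp :=
    funext fun j => π.apply_symm_apply _
  rw [h3] at h2
  exact h2.symm

end Witness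

/-! ### STATEMENT 7 -/

theorem statement7
    {D : Schema} {C : Type} [Fintype C] {n : ℕ}
    {sig : Fin (n+1) → AgentSig} {U : Type}
    (cst : C → U) (hcst : Function.Injective cst)
    {Ag : ∀ i, Agent D (sig i) U} (M : ACMAS D sig Ag)
    (hM : M.Std)
    (hu : Uniform cst M) :
    ∀ s ∈ M.S, ∀ s' ∈ M.S, Iso cst cst s s' → OBisimilar cst cst M M s s' := by
  intro s hs s' hs' hiso
  set R : GState D n U → GState D n U → Prop :=
    fun a b => a ∈ M.S ∧ b ∈ M.S ∧ Iso cst cst a b with hR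
  have hRsymm : ∀ a b, R a b → R b a := fun a b h =>
    ⟨h.2.1, h.1, iso_symm h.2.2⟩
  have hsim : ∀ a b, R a b →
      a ∈ M.S ∧ b ∈ M.S ∧ Iso cst cst a b ∧
      (∀ t, M.Tr a t → ∃ t', M.Tr b t' ∧
        Iso cst cst (oplusG a t) (oplusG b t') ∧ R t t') ∧
      (∀ (t : GState D n U) (i : Fin n), M.Epi i.succ a t →
        ∃ t', M.Epi i.succ b t' ∧
          Iso cst cst (oplusG a t) (oplusG b t') ∧ R t t') := by
    rintro a b ⟨ha, hb, hi⟩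
    obtain ⟨π, hw⟩ := iso_exists_perm hi
    have hc : ∀ c, π (cst c) = cst c := hw.2.1
    refine ⟨ha, hb, hi, ?_, ?_⟩
    · rintro t ⟨act, htau⟩
      have ht : t ∈ M.S := M.tau_closed a ha act htau
      have hw2 : IsWitness cst cst (⇑π) (oplusG a t)
          (oplusG b (fun i => (t i).map ⇑π)) := oplus_witness π hw t
      have ht' : (fun i => (t i).map ⇑π) ∈ M.τ b (JAct.map (⇑π) act) :=
        hu.1 a ha t ht b hb _ act htau (⇑π) hw2 (⇑π) (fun u _ => rfl)
          (π.injective.injOn) hc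
      exact ⟨_, ⟨_, ht'⟩, ⟨⇑π, hw2⟩,
        ht, M.tau_closed b hb _ ht', ⟨⇑π, map_witness π hc t⟩⟩
    · rintro t i hepi
      have hw2 : IsWitness cst cst (⇑π) (oplusG a t)
          (oplusG b (fun i => (t i).map ⇑π)) := oplus_witness π hw t
      have hepi' : M.Epi i.succ b (fun i => (t i).map ⇑π) :=
        hu.2 a ha t hepi.2.1 b hb _ i hepi ⟨⇑π, hw2⟩
      exact ⟨_, hepi', ⟨⇑π, hw2⟩, hepi.2.1, hepi'.2.1,
        ⟨⇑π, map_witness π hc t⟩⟩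
  refine ⟨R, ⟨fun a b hab => hsim a b hab, ?_⟩, hs, hs', hiso⟩
  intro x y hxy
  obtain ⟨hx, hy, hi, h1, h2⟩ := hsim x y (hRsymm y x hxy)
  refine ⟨hx, hy, hi, fun t ht => ?_, fun t i ht => ?_⟩
  · obtain ⟨t', htr, hiso2, hr⟩ := h1 t ht
    exact ⟨t', htr, hiso2, hRsymm _ _ hr⟩
  · obtain ⟨t', htr, hiso2, hr⟩ := h2 t i ht
    exact ⟨t', htr, hiso2, hRsymm _ _ hr⟩
end
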